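/- arXiv:1804.05682 — 3 statements merged into one kernel-verified Lean document; each statement's English description precedes it below -/
import Mathlib

section
/- Let L > 0, λ ∈ ℝ, and let k : ℝ² → ℝ be C^∞. Define G : ℝ² → ℝ by G(s,t) := k(s+t, t). Then k solves the kernel model (kEq) with parameter λ if and only if G satisfies the integral equation G(s,t) = (λ/3) s t + (1/3) ∫_0^t ∫_0^s ∫_0^ω ( -G_{ttt}(ξ,η) + 3 G_{stt}(ξ,η) - G_t(ξ,η) - λ G(ξ,η) ) dξ dω dη for all (s,t) in the triangle 𝒯₀ = {(s,t) : 0 ≤ t ≤ L, 0 ≤ s ≤ L - t}. -/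
open MeasureTheory Real

/-- Partial derivative in the first variable. -/
noncomputable def pd1 (f : ℝ × ℝ → ℝ) : ℝ × ℝ → ℝ := fun q => deriv (fun s => f (s, q.2)) q.1

/-- Partial derivative in the second variable. -/
noncomputable def pd2 (f : ℝ × ℝ → ℝ) : ℝ × ℝ → ℝ := fun q => deriv (fun s => f (q.1, s)) q.2

/-- `k` solves the kernel model (kEq) with parameter `lam` on the triangle `Δ_L`. -/
def SolvesKEq (L lam : ℝ) (k : ℝ × ℝ → ℝ) : Prop :=
  (∀ x y : ℝ, 0 ≤ y → y ≤ x → x ≤ L →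
      pd1 (pd1 (pd1 k)) (x, y) + pd2 (pd2 (pd2 k)) (x, y) + pd2 k (x, y) + pd1 k (x, y)
        = -lam * k (x, y)) ∧
  (∀ x : ℝ, 0 ≤ x → x ≤ L → k (x, x) = 0) ∧
  (∀ x : ℝ, 0 ≤ x → x ≤ L → k (x, 0) = 0) ∧
  (∀ x : ℝ, 0 ≤ x → x ≤ L → pd1 k (x, x) = lam * x / 3)

section PD
variable {f g : ℝ × ℝ → ℝ}

lemma hasDerivAt_pd1 (hf : Differentiable ℝ f) (a b : ℝ) :
    HasDerivAt (fun s => f (s, b)) (pd1 f (a, b)) a := by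
  have hp : HasDerivAt (fun s : ℝ => (s, b)) ((1 : ℝ), (0 : ℝ)) a :=
    (hasDerivAt_id a).prodMk (hasDerivAt_const _ _)
  have h := (hf (a, b)).hasFDerivAt.comp_hasDerivAt a hp
  have : pd1 f (a, b) = fderiv ℝ f (a, b) (1, 0) := h.deriv
  rw [this]; exact h

lemma hasDerivAt_pd2 (hf : Differentiable ℝ f) (a b : ℝ) :
    HasDerivAt (fun t => f (a, t)) (pd2 f (a, b)) b := by
  have hp : HasDerivAt (fun t : ℝ => (a, t)) ((0 : ℝ), (1 : ℝ)) b :=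
    (hasDerivAt_const _ _).prodMk (hasDerivAt_id b)
  have h := (hf (a, b)).hasFDerivAt.comp_hasDerivAt b hp
  have : pd2 f (a, b) = fderiv ℝ f (a, b) (0, 1) := h.deriv
  rw [this]; exact h

lemma pd1_eq_fderiv (hf : Differentiable ℝ f) (a b : ℝ) :
    pd1 f (a, b) = fderiv ℝ f (a, b) (1, 0) := by
  have hp : HasDerivAt (fun s : ℝ => (s, b)) ((1 : ℝ), (0 : ℝ)) a :=
    (hasDerivAt_id a).prodMk (hasDerivAt_const _ _)
  exact ((hf (a, b)).hasFDerivAt.comp_hasDerivAt a hp).deriv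

lemma pd2_eq_fderiv (hf : Differentiable ℝ f) (a b : ℝ) :
    pd2 f (a, b) = fderiv ℝ f (a, b) (0, 1) := by
  have hp : HasDerivAt (fun t : ℝ => (a, t)) ((0 : ℝ), (1 : ℝ)) b :=
    (hasDerivAt_const _ _).prodMk (hasDerivAt_id b)
  exact ((hf (a, b)).hasFDerivAt.comp_hasDerivAt b hp).deriv

lemma contDiff_pd1 (hf : ContDiff ℝ (⊤ : ℕ∞) f) : ContDiff ℝ (⊤ : ℕ∞) (pd1 f) := by
  have : pd1 f = fun q => fderiv ℝ f q (1, 0) := by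
    funext q
    rw [← Prod.mk.eta (p := q)]
    exact pd1_eq_fderiv (hf.differentiable (by simp)) q.1 q.2
  rw [this]
  exact (hf.fderiv_right (by simp)).clm_apply contDiff_const

lemma contDiff_pd2 (hf : ContDiff ℝ (⊤ : ℕ∞) f) : ContDiff ℝ (⊤ : ℕ∞) (pd2 f) := by
  have : pd2 f = fun q => fderiv ℝ f q (0, 1) := by
    funext q
    rw [← Prod.mk.eta (p := q)]
    exact pd2_eq_fderiv (hf.differentiable (by simp)) q.1 q.2
  rw [this]
  exact (hf.fderiv_right (by simp)).clm_apply contDiff_const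

lemma pd_comm (hf : ContDiff ℝ (⊤ : ℕ∞) f) (a b : ℝ) :
    pd1 (pd2 f) (a, b) = pd2 (pd1 f) (a, b) := by
  have hd : Differentiable ℝ f := hf.differentiable (by simp)
  have hd' : Differentiable ℝ (fderiv ℝ f) := (hf.fderiv_right (m := (⊤ : ℕ∞)) (by simp)).differentiable (by simp)
  have e2 : pd2 f = fun q => fderiv ℝ f q (0, 1) := by
    funext q; rw [← Prod.mk.eta (p := q)]; exact pd2_eq_fderiv hd q.1 q.2
  have e1 : pd1 f = fun q => fderiv ℝ f q (1, 0) := by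
    funext q; rw [← Prod.mk.eta (p := q)]; exact pd1_eq_fderiv hd q.1 q.2
  have h1 : HasDerivAt (fun s : ℝ => fderiv ℝ f (s, b)) (fderiv ℝ (fderiv ℝ f) (a, b) (1, 0)) a := by
    have hp : HasDerivAt (fun s : ℝ => (s, b)) ((1 : ℝ), (0 : ℝ)) a :=
      (hasDerivAt_id a).prodMk (hasDerivAt_const _ _)
    exact (hd' (a, b)).hasFDerivAt.comp_hasDerivAt a hp
  have h2 : HasDerivAt (fun t : ℝ => fderiv ℝ f (a, t)) (fderiv ℝ (fderiv ℝ f) (a, b) (0, 1)) b := by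
    have hp : HasDerivAt (fun t : ℝ => (a, t)) ((0 : ℝ), (1 : ℝ)) b :=
      (hasDerivAt_const _ _).prodMk (hasDerivAt_id b)
    exact (hd' (a, b)).hasFDerivAt.comp_hasDerivAt b hp
  have sym := second_derivative_symmetric (f' := fderiv ℝ f)
    (fun y => (hd y).hasFDerivAt) (hd' (a, b)).hasFDerivAt (1, 0) (0, 1)
  have v1 : pd1 (pd2 f) (a, b) = fderiv ℝ (fderiv ℝ f) (a, b) (1, 0) (0, 1) := by
    have : pd1 (pd2 f) (a, b) = deriv (fun s => fderiv ℝ f (s, b) (0, 1)) a := by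
      simp only [pd1, e2]
    rw [this]
    have := (h1.clm_apply (hasDerivAt_const a ((0 : ℝ), (1 : ℝ)))).deriv
    simpa using this
  have v2 : pd2 (pd1 f) (a, b) = fderiv ℝ (fderiv ℝ f) (a, b) (0, 1) (1, 0) := by
    have : pd2 (pd1 f) (a, b) = deriv (fun t => fderiv ℝ f (a, t) (1, 0)) b := by
      simp only [pd2, e1]
    rw [this]
    have := (h2.clm_apply (hasDerivAt_const b ((1 : ℝ), (0 : ℝ)))).deriv
    simpa using this
  rw [v1, v2, sym]

end PD

section PD2
variable {f g : ℝ × ℝ → ℝ}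

lemma pd1_shift (hf : Differentiable ℝ f) (a b : ℝ) :
    pd1 (fun q => f (q.1 + q.2, q.2)) (a, b) = pd1 f (a + b, b) := by
  have hp : HasDerivAt (fun s : ℝ => (s + b, b)) ((1 : ℝ), (0 : ℝ)) a :=
    ((hasDerivAt_id a).add_const b).prodMk (hasDerivAt_const _ _)
  have h := (hf (a + b, b)).hasFDerivAt.comp_hasDerivAt a hp
  rw [pd1_eq_fderiv hf]
  exact h.deriv

lemma pd2_shift (hf : Differentiable ℝ f) (a b : ℝ) :
    pd2 (fun q => f (q.1 + q.2, q.2)) (a, b) = pd1 f (a + b, b) + pd2 f (a + b, b) := by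
  have hp : HasDerivAt (fun t : ℝ => (a + t, t)) ((1 : ℝ), (1 : ℝ)) b :=
    ((hasDerivAt_id b).const_add a).prodMk (hasDerivAt_id b)
  have h := HasFDerivAt.comp_hasDerivAt (f := fun t : ℝ => (a + t, t)) b
    (hf (a + b, b)).hasFDerivAt hp
  have h2 := h.deriv
  have hsplit : ((1 : ℝ), (1 : ℝ)) = ((1 : ℝ), (0 : ℝ)) + ((0 : ℝ), (1 : ℝ)) := by
    simp [Prod.ext_iff]
  rw [hsplit, map_add] at h2
  rw [pd1_eq_fderiv hf, pd2_eq_fderiv hf]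
  exact h2

lemma pd1_add (hf : Differentiable ℝ f) (hg : Differentiable ℝ g) (a b : ℝ) :
    pd1 (fun q => f q + g q) (a, b) = pd1 f (a, b) + pd1 g (a, b) :=
  ((hasDerivAt_pd1 hf a b).add (hasDerivAt_pd1 hg a b)).deriv

lemma pd2_add (hf : Differentiable ℝ f) (hg : Differentiable ℝ g) (a b : ℝ) :
    pd2 (fun q => f q + g q) (a, b) = pd2 f (a, b) + pd2 g (a, b) :=
  ((hasDerivAt_pd2 hf a b).add (hasDerivAt_pd2 hg a b)).deriv

lemma hasDerivAt_diag (hf : Differentiable ℝ f) (b : ℝ) :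
    HasDerivAt (fun t => f (t, t)) (pd1 f (b, b) + pd2 f (b, b)) b := by
  have hp : HasDerivAt (fun t : ℝ => (t, t)) ((1 : ℝ), (1 : ℝ)) b :=
    (hasDerivAt_id b).prodMk (hasDerivAt_id b)
  have h := HasFDerivAt.comp_hasDerivAt (f := fun t : ℝ => (t, t)) b
    (hf (b, b)).hasFDerivAt hp
  have hsplit : ((1 : ℝ), (1 : ℝ)) = ((1 : ℝ), (0 : ℝ)) + ((0 : ℝ), (1 : ℝ)) := by
    simp [Prod.ext_iff]
  rw [hsplit, map_add] at h
  rw [pd1_eq_fderiv hf, pd2_eq_fderiv hf]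
  exact h

lemma slice1_continuous (hf : Continuous f) (b : ℝ) : Continuous (fun s => f (s, b)) :=
  hf.comp (continuous_id.prodMk continuous_const)

lemma slice2_continuous (hf : Continuous f) (a : ℝ) : Continuous (fun t => f (a, t)) :=
  hf.comp (continuous_const.prodMk continuous_id)

lemma integral_pd1 (hF : ContDiff ℝ (⊤ : ℕ∞) f) (b u : ℝ) :
    ∫ x in (0:ℝ)..u, pd1 f (x, b) = f (u, b) - f (0, b) := by
  apply intervalIntegral.integral_eq_sub_of_hasDerivAt
    (fun x _ => hasDerivAt_pd1 (hF.differentiable (by simp)) x b)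
  exact (slice1_continuous (contDiff_pd1 hF).continuous b).intervalIntegrable _ _

lemma integral_pd2 (hF : ContDiff ℝ (⊤ : ℕ∞) f) (a u : ℝ) :
    ∫ y in (0:ℝ)..u, pd2 f (a, y) = f (a, u) - f (a, 0) := by
  apply intervalIntegral.integral_eq_sub_of_hasDerivAt
    (fun y _ => hasDerivAt_pd2 (hF.differentiable (by simp)) a y)
  exact (slice2_continuous (contDiff_pd2 hF).continuous a).intervalIntegrable _ _

end PD2

/-- primitive in the first variable -/
noncomputable def prim (F : ℝ × ℝ → ℝ) : ℝ × ℝ → ℝ := fun p => ∫ x in (0:ℝ)..p.1, F (x, p.2)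
/-- primitive in the second variable -/
noncomputable def prim2 (F : ℝ × ℝ → ℝ) : ℝ × ℝ → ℝ := fun p => ∫ y in (0:ℝ)..p.2, F (p.1, y)

section Prim
variable {F : ℝ × ℝ → ℝ}

set_option maxHeartbeats 1000000 in
lemma prim_continuous (hF : Continuous F) : Continuous (prim F) := by
  have h : Continuous fun p : ℝ × ℝ => ∫ x in (0:ℝ)..p.2, F (x, p.1) := by
    apply intervalIntegral.continuous_parametric_primitive_of_continuous
      (μ := volume) (f := fun (b : ℝ) (x : ℝ) => F (x, b)) (a₀ := 0)
    exact hF.comp continuous_swap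
  have e : prim F = (fun p : ℝ × ℝ => ∫ x in (0:ℝ)..p.2, F (x, p.1)) ∘ Prod.swap := by
    funext p; rfl
  rw [e]; exact h.comp continuous_swap

set_option maxHeartbeats 1000000 in
lemma prim2_continuous (hF : Continuous F) : Continuous (prim2 F) := by
  apply intervalIntegral.continuous_parametric_primitive_of_continuous
    (μ := volume) (f := fun a y => F (a, y)) (a₀ := 0)
  exact hF

lemma hasDerivAt_prim_slice (hF : Continuous F) (a b : ℝ) :
    HasDerivAt (fun s => prim F (s, b)) (F (a, b)) a :=
  ((slice1_continuous hF b).integral_hasStrictDerivAt 0 a).hasDerivAt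

lemma hasDerivAt_prim2_slice (hF : Continuous F) (a b : ℝ) :
    HasDerivAt (fun t => prim2 F (a, t)) (F (a, b)) b :=
  ((slice2_continuous hF a).integral_hasStrictDerivAt 0 b).hasDerivAt

end Prim

section Tri
variable {L : ℝ}

/-- the open triangle -/
def openTri (L : ℝ) : Set (ℝ × ℝ) := {q | 0 < q.1 ∧ 0 < q.2 ∧ q.1 + q.2 < L}

lemma isOpen_openTri : IsOpen (openTri L) := by
  have h1 : IsOpen {q : ℝ × ℝ | 0 < q.1} := isOpen_lt continuous_const continuous_fst
  have h2 : IsOpen {q : ℝ × ℝ | 0 < q.2} := isOpen_lt continuous_const continuous_snd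
  have h3 : IsOpen {q : ℝ × ℝ | q.1 + q.2 < L} :=
    isOpen_lt (continuous_fst.add continuous_snd) continuous_const
  simp only [openTri, Set.setOf_and]
  exact h1.inter (h2.inter h3)

lemma mem_closure_openTri (hL : 0 < L) {a b : ℝ} (ha : 0 ≤ a) (hb : 0 ≤ b)
    (hab : a + b ≤ L) : (a, b) ∈ closure (openTri L) := by
  set c := L / 4 with hc
  have hcpos : 0 < c := by positivity
  set θ : ℕ → ℝ := fun n => 1 / (n + 1) with hθ
  have hθpos : ∀ n, 0 < θ n := fun n => by positivity
  have hθle : ∀ n, θ n ≤ 1 := fun n => by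
    rw [hθ]; rw [div_le_one (by positivity)]; simp
  have hmem : ∀ n, ((1 - θ n) * a + θ n * c, (1 - θ n) * b + θ n * c) ∈ openTri L := by
    intro n
    have h1 := hθpos n
    have h2 := hθle n
    refine ⟨?_, ?_, ?_⟩
    · have : 0 ≤ (1 - θ n) * a := mul_nonneg (by linarith) ha
      have : 0 < θ n * c := mul_pos h1 hcpos
      simp only []
      nlinarith
    · simp only []
      nlinarith
    · simp only []
      have : (1 - θ n) * (a + b) ≤ (1 - θ n) * L := by
        apply mul_le_mul_of_nonneg_left hab (by linarith)
      nlinarith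
  refine mem_closure_of_tendsto (f := fun n => ((1 - θ n) * a + θ n * c, (1 - θ n) * b + θ n * c))
    (b := Filter.atTop) ?_ (Filter.Eventually.of_forall hmem)
  · have h0 : Filter.Tendsto θ Filter.atTop (nhds 0) := by
      rw [hθ]
      simpa using tendsto_one_div_add_atTop_nhds_zero_nat (𝕜 := ℝ)
    have h1 : Filter.Tendsto (fun n => (1 - θ n) * a + θ n * c) Filter.atTop (nhds a) := by
      have := ((tendsto_const_nhds (x := (1:ℝ))).sub h0).mul (tendsto_const_nhds (x := a))
      have h2 := this.add (h0.mul (tendsto_const_nhds (x := c)))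
      simpa using h2
    have h2 : Filter.Tendsto (fun n => (1 - θ n) * b + θ n * c) Filter.atTop (nhds b) := by
      have := ((tendsto_const_nhds (x := (1:ℝ))).sub h0).mul (tendsto_const_nhds (x := b))
      have h2 := this.add (h0.mul (tendsto_const_nhds (x := c)))
      simpa using h2
    exact h1.prodMk_nhds h2

lemma eq_on_closure {F H : ℝ × ℝ → ℝ} (hF : Continuous F) (hH : Continuous H)
    {U : Set (ℝ × ℝ)} (h : ∀ q ∈ U, F q = H q) {q : ℝ × ℝ} (hq : q ∈ closure U) :
    F q = H q := by
  have hclosed : IsClosed {q : ℝ × ℝ | F q = H q} := isClosed_eq hF hH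
  exact hclosed.closure_subset_iff.2 (fun p hp => h p hp) (closure_mono (fun p hp => hp) hq)

lemma pd1_eqOn {F H : ℝ × ℝ → ℝ} {U : Set (ℝ × ℝ)} (hU : IsOpen U)
    (h : ∀ p ∈ U, F p = H p) {a b : ℝ} (hq : (a, b) ∈ U) :
    pd1 F (a, b) = pd1 H (a, b) := by
  apply Filter.EventuallyEq.deriv_eq
  have hmem : {s : ℝ | (s, b) ∈ U} ∈ nhds a :=
    (hU.preimage (continuous_id.prodMk continuous_const)).mem_nhds hq
  filter_upwards [hmem] with s hs using h _ hs

lemma pd2_eqOn {F H : ℝ × ℝ → ℝ} {U : Set (ℝ × ℝ)} (hU : IsOpen U)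
    (h : ∀ p ∈ U, F p = H p) {a b : ℝ} (hq : (a, b) ∈ U) :
    pd2 F (a, b) = pd2 H (a, b) := by
  apply Filter.EventuallyEq.deriv_eq
  have hmem : {t : ℝ | (a, t) ∈ U} ∈ nhds b :=
    (hU.preimage (continuous_const.prodMk continuous_id)).mem_nhds hq
  filter_upwards [hmem] with t ht using h _ ht

end Tri

lemma integral_swap_cont {B : ℝ × ℝ → ℝ} (hB : Continuous B) {s t : ℝ}
    (hs : 0 ≤ s) (ht : 0 ≤ t) :
    ∫ η in (0:ℝ)..t, ∫ ω in (0:ℝ)..s, B (ω, η) =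
      ∫ ω in (0:ℝ)..s, ∫ η in (0:ℝ)..t, B (ω, η) := by
  rw [intervalIntegral.integral_of_le ht, intervalIntegral.integral_of_le hs]
  simp_rw [intervalIntegral.integral_of_le hs, intervalIntegral.integral_of_le ht]
  have hint : Integrable (Function.uncurry fun (η ω : ℝ) => B (ω, η))
      ((volume.restrict (Set.Ioc 0 t)).prod (volume.restrict (Set.Ioc 0 s))) := by
    rw [Measure.prod_restrict]
    have h1 : IntegrableOn (Function.uncurry fun (η ω : ℝ) => B (ω, η))
        (Set.Icc (0:ℝ) t ×ˢ Set.Icc (0:ℝ) s) (volume.prod volume) := by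
      exact ((hB.comp continuous_swap).continuousOn).integrableOn_compact
        (isCompact_Icc.prod isCompact_Icc)
    exact h1.mono_set (Set.prod_mono Set.Ioc_subset_Icc_self Set.Ioc_subset_Icc_self)
  exact MeasureTheory.integral_integral_swap hint

section Expand
variable {k : ℝ × ℝ → ℝ}

lemma expand_g2 (hk : ContDiff ℝ (⊤ : ℕ∞) k) (a b : ℝ) :
    pd2 (fun q : ℝ × ℝ => k (q.1 + q.2, q.2)) (a, b) = pd1 k (a + b, b) + pd2 k (a + b, b) :=
  pd2_shift (hk.differentiable (by simp)) a b

lemma expand_g1 (hk : ContDiff ℝ (⊤ : ℕ∞) k) (a b : ℝ) :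
    pd1 (fun q : ℝ × ℝ => k (q.1 + q.2, q.2)) (a, b) = pd1 k (a + b, b) :=
  pd1_shift (hk.differentiable (by simp)) a b

lemma fun_g2 (hk : ContDiff ℝ (⊤ : ℕ∞) k) :
    pd2 (fun q : ℝ × ℝ => k (q.1 + q.2, q.2)) =
      fun q : ℝ × ℝ => pd1 k (q.1 + q.2, q.2) + pd2 k (q.1 + q.2, q.2) :=
  funext fun q => by rw [← Prod.mk.eta (p := q)]; exact expand_g2 hk q.1 q.2

lemma expand_g22 (hk : ContDiff ℝ (⊤ : ℕ∞) k) (a b : ℝ) :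
    pd2 (pd2 (fun q : ℝ × ℝ => k (q.1 + q.2, q.2))) (a, b) =
      pd1 (pd1 k) (a + b, b) + pd1 (pd2 k) (a + b, b)
        + (pd2 (pd1 k) (a + b, b) + pd2 (pd2 k) (a + b, b)) := by
  rw [fun_g2 hk]
  have h1 : Differentiable ℝ (fun p : ℝ × ℝ => pd1 k p + pd2 k p) :=
    ((contDiff_pd1 hk).add (contDiff_pd2 hk)).differentiable (by simp)
  have h := pd2_shift (f := fun p : ℝ × ℝ => pd1 k p + pd2 k p) h1 a b
  rw [h]
  rw [pd1_add ((contDiff_pd1 hk).differentiable (by simp)) ((contDiff_pd2 hk).differentiable (by simp)),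
    pd2_add ((contDiff_pd1 hk).differentiable (by simp)) ((contDiff_pd2 hk).differentiable (by simp))]

lemma fun_g22 (hk : ContDiff ℝ (⊤ : ℕ∞) k) :
    pd2 (pd2 (fun q : ℝ × ℝ => k (q.1 + q.2, q.2))) =
      fun q : ℝ × ℝ => pd1 (pd1 k) (q.1 + q.2, q.2) + pd1 (pd2 k) (q.1 + q.2, q.2)
        + (pd2 (pd1 k) (q.1 + q.2, q.2) + pd2 (pd2 k) (q.1 + q.2, q.2)) :=
  funext fun q => by rw [← Prod.mk.eta (p := q)]; exact expand_g22 hk q.1 q.2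

lemma expand_g222 (hk : ContDiff ℝ (⊤ : ℕ∞) k) (a b : ℝ) :
    pd2 (pd2 (pd2 (fun q : ℝ × ℝ => k (q.1 + q.2, q.2)))) (a, b) =
      (pd1 (pd1 (pd1 k)) (a + b, b) + pd1 (pd1 (pd2 k)) (a + b, b)
        + (pd1 (pd2 (pd1 k)) (a + b, b) + pd1 (pd2 (pd2 k)) (a + b, b)))
      + (pd2 (pd1 (pd1 k)) (a + b, b) + pd2 (pd1 (pd2 k)) (a + b, b)
        + (pd2 (pd2 (pd1 k)) (a + b, b) + pd2 (pd2 (pd2 k)) (a + b, b))) := by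
  rw [fun_g22 hk]
  have d11 := (contDiff_pd1 (contDiff_pd1 hk)).differentiable (by simp)
  have d12 := (contDiff_pd1 (contDiff_pd2 hk)).differentiable (by simp)
  have d21 := (contDiff_pd2 (contDiff_pd1 hk)).differentiable (by simp)
  have d22 := (contDiff_pd2 (contDiff_pd2 hk)).differentiable (by simp)
  have h1 : Differentiable ℝ (fun p : ℝ × ℝ =>
      pd1 (pd1 k) p + pd1 (pd2 k) p + (pd2 (pd1 k) p + pd2 (pd2 k) p)) :=
    ((d11.add d12).add (d21.add d22))
  have h := pd2_shift (f := fun p : ℝ × ℝ =>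
      pd1 (pd1 k) p + pd1 (pd2 k) p + (pd2 (pd1 k) p + pd2 (pd2 k) p)) h1 a b
  rw [h]
  rw [pd1_add (f := fun p => pd1 (pd1 k) p + pd1 (pd2 k) p) (g := fun p => pd2 (pd1 k) p + pd2 (pd2 k) p) (d11.add d12) (d21.add d22), pd2_add (f := fun p => pd1 (pd1 k) p + pd1 (pd2 k) p) (g := fun p => pd2 (pd1 k) p + pd2 (pd2 k) p) (d11.add d12) (d21.add d22),
    pd1_add d11 d12, pd1_add d21 d22, pd2_add d11 d12, pd2_add d21 d22]

lemma expand_g122 (hk : ContDiff ℝ (⊤ : ℕ∞) k) (a b : ℝ) :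
    pd1 (pd2 (pd2 (fun q : ℝ × ℝ => k (q.1 + q.2, q.2)))) (a, b) =
      pd1 (pd1 (pd1 k)) (a + b, b) + pd1 (pd1 (pd2 k)) (a + b, b)
        + (pd1 (pd2 (pd1 k)) (a + b, b) + pd1 (pd2 (pd2 k)) (a + b, b)) := by
  rw [fun_g22 hk]
  have d11 := (contDiff_pd1 (contDiff_pd1 hk)).differentiable (by simp)
  have d12 := (contDiff_pd1 (contDiff_pd2 hk)).differentiable (by simp)
  have d21 := (contDiff_pd2 (contDiff_pd1 hk)).differentiable (by simp)
  have d22 := (contDiff_pd2 (contDiff_pd2 hk)).differentiable (by simp)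
  have h := pd1_shift (f := fun p : ℝ × ℝ =>
      pd1 (pd1 k) p + pd1 (pd2 k) p + (pd2 (pd1 k) p + pd2 (pd2 k) p))
    ((d11.add d12).add (d21.add d22)) a b
  rw [h]
  rw [pd1_add (f := fun p => pd1 (pd1 k) p + pd1 (pd2 k) p) (g := fun p => pd2 (pd1 k) p + pd2 (pd2 k) p) (d11.add d12) (d21.add d22), pd1_add d11 d12, pd1_add d21 d22]

lemma fun_g12 (hk : ContDiff ℝ (⊤ : ℕ∞) k) :
    pd1 (pd2 (fun q : ℝ × ℝ => k (q.1 + q.2, q.2))) =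
      fun q : ℝ × ℝ => pd1 (pd1 k) (q.1 + q.2, q.2) + pd1 (pd2 k) (q.1 + q.2, q.2) := by
  funext q
  rw [← Prod.mk.eta (p := q), fun_g2 hk]
  have d1 := (contDiff_pd1 hk).differentiable (by simp)
  have d2 := (contDiff_pd2 hk).differentiable (by simp)
  have h := pd1_shift (f := fun p : ℝ × ℝ => pd1 k p + pd2 k p) (d1.add d2) q.1 q.2
  rw [h, pd1_add d1 d2]

lemma expand_g112 (hk : ContDiff ℝ (⊤ : ℕ∞) k) (a b : ℝ) :
    pd1 (pd1 (pd2 (fun q : ℝ × ℝ => k (q.1 + q.2, q.2)))) (a, b) =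
      pd1 (pd1 (pd1 k)) (a + b, b) + pd1 (pd1 (pd2 k)) (a + b, b) := by
  rw [fun_g12 hk]
  have d11 := (contDiff_pd1 (contDiff_pd1 hk)).differentiable (by simp)
  have d12 := (contDiff_pd1 (contDiff_pd2 hk)).differentiable (by simp)
  have h := pd1_shift (f := fun p : ℝ × ℝ => pd1 (pd1 k) p + pd1 (pd2 k) p)
    (d11.add d12) a b
  rw [h, pd1_add d11 d12]

lemma clair21 (hk : ContDiff ℝ (⊤ : ℕ∞) k) : pd2 (pd1 k) = pd1 (pd2 k) :=
  funext fun q => by rw [← Prod.mk.eta (p := q)]; exact (pd_comm hk q.1 q.2).symm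

/-- The master pointwise identity relating the integrand to `3 G_sst` and the PDE expression. -/
lemma master (hk : ContDiff ℝ (⊤ : ℕ∞) k) (lam a b : ℝ) :
    -(pd2 (pd2 (pd2 (fun q : ℝ × ℝ => k (q.1 + q.2, q.2)))) (a, b))
      + 3 * pd1 (pd2 (pd2 (fun q : ℝ × ℝ => k (q.1 + q.2, q.2)))) (a, b)
      - pd2 (fun q : ℝ × ℝ => k (q.1 + q.2, q.2)) (a, b)
      - lam * (fun q : ℝ × ℝ => k (q.1 + q.2, q.2)) (a, b)
    = 3 * pd1 (pd1 (pd2 (fun q : ℝ × ℝ => k (q.1 + q.2, q.2)))) (a, b)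
      - (pd1 (pd1 (pd1 k)) (a + b, b) + pd2 (pd2 (pd2 k)) (a + b, b)
        + pd2 k (a + b, b) + pd1 k (a + b, b) + lam * k (a + b, b)) := by
  have c121 : pd1 (pd2 (pd1 k)) (a + b, b) = pd1 (pd1 (pd2 k)) (a + b, b) := by
    rw [clair21 hk]
  have c211 : pd2 (pd1 (pd1 k)) (a + b, b) = pd1 (pd1 (pd2 k)) (a + b, b) := by
    rw [← c121, ← Prod.mk.eta (p := ((a + b : ℝ), b))]
    exact (pd_comm (contDiff_pd1 hk) (a + b) b).symm
  have c212 : pd2 (pd1 (pd2 k)) (a + b, b) = pd1 (pd2 (pd2 k)) (a + b, b) :=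
    (pd_comm (contDiff_pd2 hk) (a + b) b).symm
  have c221 : pd2 (pd2 (pd1 k)) (a + b, b) = pd1 (pd2 (pd2 k)) (a + b, b) := by
    rw [clair21 hk]; exact c212
  rw [expand_g222 hk, expand_g122 hk, expand_g112 hk, expand_g2 hk]
  simp only []
  rw [c121, c211, c212, c221]
  ring

end Expand

section RSide
variable {H : ℝ × ℝ → ℝ}

lemma prim_swap {B : ℝ × ℝ → ℝ} (hB : Continuous B) {a b : ℝ} (ha : 0 ≤ a) (hb : 0 ≤ b) :
    prim2 (prim B) (a, b) = prim (prim2 B) (a, b) :=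
  integral_swap_cont hB ha hb

lemma pdR_1 (c : ℝ) (hH : Continuous H) (a b : ℝ) :
    pd2 (fun q : ℝ × ℝ => c * q.1 * q.2 + 1 / 3 * prim2 H q) (a, b)
      = c * a + 1 / 3 * H (a, b) := by
  have hA := (hasDerivAt_prim2_slice hH a b).const_mul (1 / 3 : ℝ)
  have hB : HasDerivAt (fun τ : ℝ => c * a * τ) (c * a) b := by
    simpa using (hasDerivAt_id b).const_mul (c * a)
  exact (hB.add hA).deriv

lemma pdR_2 (c : ℝ) (hH : Continuous H) (a b : ℝ) :
    pd1 (fun q : ℝ × ℝ => c * q.1 + 1 / 3 * prim H q) (a, b)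
      = c + 1 / 3 * H (a, b) := by
  have hA := (hasDerivAt_prim_slice hH a b).const_mul (1 / 3 : ℝ)
  have hB : HasDerivAt (fun s : ℝ => c * s) c a := by
    simpa using (hasDerivAt_id a).const_mul c
  exact (hB.add hA).deriv

lemma pdR_3 (c : ℝ) (hH : Continuous H) (a b : ℝ) :
    pd1 (fun q : ℝ × ℝ => c + 1 / 3 * prim H q) (a, b)
      = 1 / 3 * H (a, b) := by
  have hA := (hasDerivAt_prim_slice hH a b).const_mul (1 / 3 : ℝ)
  exact ((hasDerivAt_const a c).add hA).deriv.trans (by ring)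

lemma pdR_4 (c : ℝ) (hH : Continuous H) (a b : ℝ) :
    pd1 (fun q : ℝ × ℝ => c * q.1 * q.2 + 1 / 3 * prim H q) (a, b)
      = c * b + 1 / 3 * H (a, b) := by
  have hA := (hasDerivAt_prim_slice hH a b).const_mul (1 / 3 : ℝ)
  have hB : HasDerivAt (fun s : ℝ => c * s * b) (c * b) a := by
    simpa using ((hasDerivAt_id a).const_mul c).mul_const b
  exact (hB.add hA).deriv

end RSide

/-- the integrand of the integral equation -/
noncomputable def integrand (lam : ℝ) (G : ℝ × ℝ → ℝ) : ℝ × ℝ → ℝ := fun p =>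
  -(pd2 (pd2 (pd2 G)) p) + 3 * pd1 (pd2 (pd2 G)) p - pd2 G p - lam * G p

/-- `k` solves (kEq) iff `G(s,t) := k(s+t, t)` satisfies the integral equation
on the triangle `𝒯₀ = {(s,t) : 0 ≤ t ≤ L, 0 ≤ s ≤ L - t}`. -/
theorem stmt_4 (L lam : ℝ) (hL : 0 < L) (k : ℝ × ℝ → ℝ) (hk : ContDiff ℝ (⊤ : ℕ∞) k)
    (G : ℝ × ℝ → ℝ) (hG : G = fun q => k (q.1 + q.2, q.2)) :
    SolvesKEq L lam k ↔
      (∀ s t : ℝ, 0 ≤ t → t ≤ L → 0 ≤ s → s ≤ L - t →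
        G (s, t) = lam / 3 * s * t +
          (1 / 3) * ∫ η in (0:ℝ)..t, ∫ ω in (0:ℝ)..s, ∫ ξ in (0:ℝ)..ω,
            (-(pd2 (pd2 (pd2 G)) (ξ, η)) + 3 * pd1 (pd2 (pd2 G)) (ξ, η)
              - pd2 G (ξ, η) - lam * G (ξ, η))) := by
  have hg : ContDiff ℝ (⊤ : ℕ∞) G := by
    rw [hG]
    exact hk.comp ((contDiff_fst.add contDiff_snd).prodMk contDiff_snd)
  have masterG : ∀ a b : ℝ,
      -(pd2 (pd2 (pd2 G)) (a, b)) + 3 * pd1 (pd2 (pd2 G)) (a, b)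
        - pd2 G (a, b) - lam * G (a, b)
      = 3 * pd1 (pd1 (pd2 G)) (a, b)
        - (pd1 (pd1 (pd1 k)) (a + b, b) + pd2 (pd2 (pd2 k)) (a + b, b)
          + pd2 k (a + b, b) + pd1 k (a + b, b) + lam * k (a + b, b)) := by
    intro a b
    rw [hG]
    exact master hk lam a b
  have hdiagint : ∀ a b : ℝ, pd1 (pd2 G) (a, b)
      = pd1 (pd1 k) (a + b, b) + pd1 (pd2 k) (a + b, b) := by
    intro a b
    rw [hG, fun_g12 hk]
  constructor
  · rintro ⟨hpde, hdiag, hbase, hder⟩ s t ht htL hs hsL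
    -- the PDE kills the `P` bracket on the triangle
    have hP0 : ∀ ξ η : ℝ, 0 ≤ ξ → 0 ≤ η → ξ + η ≤ L →
        -(pd2 (pd2 (pd2 G)) (ξ, η)) + 3 * pd1 (pd2 (pd2 G)) (ξ, η)
          - pd2 G (ξ, η) - lam * G (ξ, η) = 3 * pd1 (pd1 (pd2 G)) (ξ, η) := by
      intro ξ η hξ hη hξη
      have hpde' := hpde (ξ + η) η hη (by linarith) hξη
      have hm := masterG ξ η
      linarith
    have step1 : ∀ η ∈ Set.Icc (0:ℝ) t, ∀ ω ∈ Set.Icc (0:ℝ) s,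
        (∫ ξ in (0:ℝ)..ω,
          (-(pd2 (pd2 (pd2 G)) (ξ, η)) + 3 * pd1 (pd2 (pd2 G)) (ξ, η)
            - pd2 G (ξ, η) - lam * G (ξ, η)))
        = 3 * (pd1 (pd2 G) (ω, η) - pd1 (pd2 G) (0, η)) := by
      intro η hη ω hω
      have hcongr : Set.EqOn
          (fun ξ => -(pd2 (pd2 (pd2 G)) (ξ, η)) + 3 * pd1 (pd2 (pd2 G)) (ξ, η)
            - pd2 G (ξ, η) - lam * G (ξ, η))
          (fun ξ => 3 * pd1 (pd1 (pd2 G)) (ξ, η)) (Set.uIcc 0 ω) := by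
        intro ξ hξ
        rw [Set.uIcc_of_le hω.1] at hξ
        exact hP0 ξ η hξ.1 hη.1 (by have := hξ.2; have := hω.2; have := hη.2; linarith)
      rw [intervalIntegral.integral_congr hcongr, intervalIntegral.integral_const_mul,
        integral_pd1 (contDiff_pd1 (contDiff_pd2 hg)) η ω]
    have step2 : ∀ η ∈ Set.Icc (0:ℝ) t,
        (∫ ω in (0:ℝ)..s, ∫ ξ in (0:ℝ)..ω,
          (-(pd2 (pd2 (pd2 G)) (ξ, η)) + 3 * pd1 (pd2 (pd2 G)) (ξ, η)
            - pd2 G (ξ, η) - lam * G (ξ, η)))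
        = 3 * (pd2 G (s, η) - pd2 G (0, η)) - 3 * s * pd1 (pd2 G) (0, η) := by
      intro η hη
      have hcongr : Set.EqOn
          (fun ω => ∫ ξ in (0:ℝ)..ω,
            (-(pd2 (pd2 (pd2 G)) (ξ, η)) + 3 * pd1 (pd2 (pd2 G)) (ξ, η)
              - pd2 G (ξ, η) - lam * G (ξ, η)))
          (fun ω => 3 * (pd1 (pd2 G) (ω, η) - pd1 (pd2 G) (0, η))) (Set.uIcc 0 s) := by
        intro ω hω
        rw [Set.uIcc_of_le hs] at hω
        exact step1 η hη ω hω
      rw [intervalIntegral.integral_congr hcongr, intervalIntegral.integral_const_mul]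
      have hc1 : Continuous (pd1 (pd2 G)) := (contDiff_pd1 (contDiff_pd2 hg)).continuous
      rw [intervalIntegral.integral_sub
        ((slice1_continuous hc1 η).intervalIntegrable _ _)
        (intervalIntegrable_const)]
      rw [integral_pd1 (contDiff_pd2 hg) η s, intervalIntegral.integral_const]
      simp only [smul_eq_mul]
      ring
    have hdcont : Continuous (fun η : ℝ => pd1 (pd2 G) (0, η)) :=
      slice2_continuous (contDiff_pd1 (contDiff_pd2 hg)).continuous 0
    have hdint : ∫ η in (0:ℝ)..t, pd1 (pd2 G) (0, η) = pd1 k (t, t) - pd1 k (0, 0) := by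
      have hcongr : Set.EqOn (fun η : ℝ => pd1 (pd2 G) (0, η))
          (fun η : ℝ => pd1 (pd1 k) (η, η) + pd2 (pd1 k) (η, η)) (Set.uIcc 0 t) := by
        intro η _
        show pd1 (pd2 G) (0, η) = pd1 (pd1 k) (η, η) + pd2 (pd1 k) (η, η)
        rw [hdiagint 0 η, zero_add, clair21 hk]
      rw [intervalIntegral.integral_congr hcongr]
      apply intervalIntegral.integral_eq_sub_of_hasDerivAt
        (fun η _ => hasDerivAt_diag ((contDiff_pd1 hk).differentiable (by simp)) η)
      apply Continuous.intervalIntegrable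
      have cdiag : Continuous fun η : ℝ => (η, η) := continuous_id.prodMk continuous_id
      exact ((contDiff_pd1 (contDiff_pd1 hk)).continuous.comp cdiag).add
        ((contDiff_pd2 (contDiff_pd1 hk)).continuous.comp cdiag)
    have step3 : (∫ η in (0:ℝ)..t, ∫ ω in (0:ℝ)..s, ∫ ξ in (0:ℝ)..ω,
          (-(pd2 (pd2 (pd2 G)) (ξ, η)) + 3 * pd1 (pd2 (pd2 G)) (ξ, η)
            - pd2 G (ξ, η) - lam * G (ξ, η)))
        = 3 * ((G (s, t) - G (s, 0)) - (G (0, t) - G (0, 0)))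
          - 3 * s * (pd1 k (t, t) - pd1 k (0, 0)) := by
      have hcongr : Set.EqOn
          (fun η => ∫ ω in (0:ℝ)..s, ∫ ξ in (0:ℝ)..ω,
            (-(pd2 (pd2 (pd2 G)) (ξ, η)) + 3 * pd1 (pd2 (pd2 G)) (ξ, η)
              - pd2 G (ξ, η) - lam * G (ξ, η)))
          (fun η => 3 * (pd2 G (s, η) - pd2 G (0, η)) - 3 * s * pd1 (pd2 G) (0, η))
          (Set.uIcc 0 t) := by
        intro η hη
        rw [Set.uIcc_of_le ht] at hη
        exact step2 η hη
      rw [intervalIntegral.integral_congr hcongr]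
      have c1 : Continuous fun η : ℝ => pd2 G (s, η) :=
        slice2_continuous (contDiff_pd2 hg).continuous s
      have c2 : Continuous fun η : ℝ => pd2 G (0, η) :=
        slice2_continuous (contDiff_pd2 hg).continuous 0
      rw [intervalIntegral.integral_sub (f := fun η => 3 * (pd2 G (s, η) - pd2 G (0, η)))
        (g := fun η => 3 * s * pd1 (pd2 G) (0, η))
        ((continuous_const.mul (c1.sub c2)).intervalIntegrable _ _)
        ((continuous_const.mul hdcont).intervalIntegrable _ _),
        intervalIntegral.integral_const_mul, intervalIntegral.integral_const_mul,
        intervalIntegral.integral_sub (c1.intervalIntegrable _ _) (c2.intervalIntegrable _ _),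
        integral_pd2 hg s t, integral_pd2 hg 0 t, hdint]
    rw [step3]
    have e1 : G (s, 0) = 0 := by
      rw [hG]; show k (s + 0, 0) = 0; rw [add_zero]; exact hbase s hs (by linarith)
    have e2 : G (0, t) = 0 := by
      rw [hG]; show k (0 + t, t) = 0; rw [zero_add]; exact hdiag t ht htL
    have e3 : G (0, 0) = 0 := by
      rw [hG]; show k (0 + 0, 0) = 0; rw [add_zero]; exact hdiag 0 le_rfl hL.le
    have e4 : pd1 k (t, t) = lam * t / 3 := hder t ht htL
    have e5 : pd1 k (0, 0) = 0 := by rw [hder 0 le_rfl hL.le]; ring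
    rw [e1, e2, e3, e4, e5]
    ring
  · intro hint
    have hσc : Continuous fun q : ℝ × ℝ => ((q.1 + q.2 : ℝ), (q.2 : ℝ)) :=
      (continuous_fst.add continuous_snd).prodMk continuous_snd
    have hf0c : Continuous (integrand lam G) := by
      unfold integrand
      exact ((((contDiff_pd2 (contDiff_pd2 (contDiff_pd2 hg))).continuous.neg).add
        (continuous_const.mul (contDiff_pd1 (contDiff_pd2 (contDiff_pd2 hg))).continuous)).sub
        (contDiff_pd2 hg).continuous).sub (continuous_const.mul hg.continuous)
    have hGR : ∀ p ∈ openTri L, G p =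
        (fun q : ℝ × ℝ => lam / 3 * q.1 * q.2
          + 1 / 3 * prim2 (prim (prim (integrand lam G))) q) p := by
      rintro ⟨a, b⟩ hp
      obtain ⟨ha, hb, hab⟩ := hp
      exact hint a b hb.le (by linarith) ha.le (by linarith)
    have h1 : ∀ p ∈ openTri L, pd2 G p =
        (fun q : ℝ × ℝ => lam / 3 * q.1 + 1 / 3 * prim (prim (integrand lam G)) q) p := by
      rintro ⟨a, b⟩ hp
      rw [pd2_eqOn isOpen_openTri hGR hp]
      exact pdR_1 (lam / 3) (prim_continuous (prim_continuous hf0c)) a b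
    have h2 : ∀ p ∈ openTri L, pd1 (pd2 G) p =
        (fun q : ℝ × ℝ => lam / 3 + 1 / 3 * prim (integrand lam G) q) p := by
      rintro ⟨a, b⟩ hp
      rw [pd1_eqOn isOpen_openTri h1 hp]
      exact pdR_2 (lam / 3) (prim_continuous hf0c) a b
    have h3 : ∀ p ∈ openTri L, pd1 (pd1 (pd2 G)) p =
        (fun q : ℝ × ℝ => 1 / 3 * integrand lam G q) p := by
      rintro ⟨a, b⟩ hp
      rw [pd1_eqOn isOpen_openTri h2 hp]
      exact pdR_3 (lam / 3) hf0c a b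
    have hP : ∀ a b : ℝ, 0 ≤ a → 0 ≤ b → a + b ≤ L →
        pd1 (pd1 (pd1 k)) (a + b, b) + pd2 (pd2 (pd2 k)) (a + b, b)
          + pd2 k (a + b, b) + pd1 k (a + b, b) + lam * k (a + b, b) = 0 := by
      intro a b ha hb hab
      have hcl := mem_closure_openTri hL ha hb hab
      have hFc : Continuous (fun q : ℝ × ℝ =>
          pd1 (pd1 (pd1 k)) (q.1 + q.2, q.2) + pd2 (pd2 (pd2 k)) (q.1 + q.2, q.2)
            + pd2 k (q.1 + q.2, q.2) + pd1 k (q.1 + q.2, q.2) + lam * k (q.1 + q.2, q.2)) := by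
        exact (((((contDiff_pd1 (contDiff_pd1 (contDiff_pd1 hk))).continuous.comp hσc).add
          ((contDiff_pd2 (contDiff_pd2 (contDiff_pd2 hk))).continuous.comp hσc)).add
          ((contDiff_pd2 hk).continuous.comp hσc)).add
          ((contDiff_pd1 hk).continuous.comp hσc)).add
          (continuous_const.mul (hk.continuous.comp hσc))
      have hzero : ∀ p ∈ openTri L, (fun q : ℝ × ℝ =>
          pd1 (pd1 (pd1 k)) (q.1 + q.2, q.2) + pd2 (pd2 (pd2 k)) (q.1 + q.2, q.2)
            + pd2 k (q.1 + q.2, q.2) + pd1 k (q.1 + q.2, q.2) + lam * k (q.1 + q.2, q.2)) p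
          = (fun _ : ℝ × ℝ => (0 : ℝ)) p := by
        rintro ⟨a', b'⟩ hp
        have hm := masterG a' b'
        have h3' := h3 (a', b') hp
        have hb' : integrand lam G (a', b') = -(pd2 (pd2 (pd2 G)) (a', b'))
            + 3 * pd1 (pd2 (pd2 G)) (a', b') - pd2 G (a', b') - lam * G (a', b') := rfl
        simp only [] at h3' ⊢
        linarith
      have := eq_on_closure hFc continuous_const hzero hcl
      simpa using this
    refine ⟨?_, ?_, ?_, ?_⟩
    · intro x y hy hyx hxL
      have h := hP (x - y) y (by linarith) hy (by linarith)
      rw [sub_add_cancel] at h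
      linarith
    · intro x hx hxL
      have h := hint 0 x hx hxL le_rfl (by linarith)
      simpa [hG, intervalIntegral.integral_same] using h
    · intro x hx hxL
      have h := hint x 0 le_rfl hL.le hx (by linarith)
      simpa [hG, intervalIntegral.integral_same] using h
    · intro x hx hxL
      have hCc : Continuous (prim2 (prim (integrand lam G))) :=
        prim2_continuous (prim_continuous hf0c)
      have hGR' : ∀ p ∈ openTri L, G p =
          (fun q : ℝ × ℝ => lam / 3 * q.1 * q.2
            + 1 / 3 * prim (prim2 (prim (integrand lam G))) q) p := by
        rintro ⟨a, b⟩ hp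
        rw [hGR (a, b) hp]
        simp only []
        rw [prim_swap (prim_continuous hf0c) hp.1.le hp.2.1.le]
      have h4 : ∀ p ∈ openTri L, pd1 G p =
          (fun q : ℝ × ℝ => lam / 3 * q.2
            + 1 / 3 * prim2 (prim (integrand lam G)) q) p := by
        rintro ⟨a, b⟩ hp
        rw [pd1_eqOn isOpen_openTri hGR' hp]
        exact pdR_4 (lam / 3) hCc a b
      have hcl := mem_closure_openTri hL le_rfl hx (by linarith)
      have hext := eq_on_closure (contDiff_pd1 hg).continuous
        ((continuous_const.mul continuous_snd).add (continuous_const.mul hCc)) h4 hcl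
      have hzero : prim2 (prim (integrand lam G)) (0, x) = 0 := by
        show (∫ η in (0:ℝ)..x, prim (integrand lam G) (0, η)) = 0
        have hz : ∀ η : ℝ, prim (integrand lam G) (0, η) = 0 := fun η =>
          intervalIntegral.integral_same
        simp only [hz, intervalIntegral.integral_zero]
      have hpd1G : pd1 G (0, x) = pd1 k (x, x) := by
        rw [hG, expand_g1 hk 0 x, zero_add]
      rw [hpd1G] at hext
      simp only [Pi.add_apply, Pi.mul_apply] at hext
      rw [hzero] at hext
      rw [hext]
      ring
end

section
/- Let L > 0 and λ̃ > 0. There exists a constant C > 0, depending only on L and λ̃, such that for every C^∞ function v : ℝ → ℝ with v(0) = v(L) = 0 one has ‖v‖_{H³(0,L)} ≤ C ( ‖v‖_{L²(0,L)} + ‖v' + v''' + λ̃ v‖_{L²(0,L)} ). -/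
open MeasureTheory Real

/-- The `L²(0,L)` norm. -/
noncomputable def L2n (L : ℝ) (f : ℝ → ℝ) : ℝ := Real.sqrt (∫ x in (0:ℝ)..L, f x ^ 2)

/-- The `H³(0,L)` norm. -/
noncomputable def H3n (L : ℝ) (f : ℝ → ℝ) : ℝ :=
  Real.sqrt (∑ j ∈ Finset.range 4, ∫ x in (0:ℝ)..L, (iteratedDeriv j f x) ^ 2)

lemma cs_key {a b c : ℝ} (ha : 0 ≤ a) (h : ∀ t : ℝ, 0 ≤ a*t^2 + 2*b*t + c) : b^2 ≤ a*c := by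
  rcases eq_or_lt_of_le ha with h0 | h0
  · by_cases hb : b = 0
    · have hc := h 0
      subst hb; simp at hc ⊢
      nlinarith
    · have ht := h ((-c-1)/(2*b))
      rw [← h0] at ht
      field_simp at ht
      rw [le_div_iff₀ (lt_of_le_of_ne (sq_nonneg b) (Ne.symm (pow_ne_zero 2 hb)))] at ht
      nlinarith [lt_of_le_of_ne (sq_nonneg b) (Ne.symm (pow_ne_zero 2 hb))]
  · have key := h (-b/a)
    have ha' : a ≠ 0 := ne_of_gt h0
    have e : a * (a*(-b/a)^2 + 2*b*(-b/a) + c) = a*c - b^2 := by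
      field_simp; ring
    nlinarith [mul_nonneg ha key]

lemma cs_int (b : ℝ) (hb : 0 ≤ b) (f g : ℝ → ℝ) (hf : Continuous f) (hg : Continuous g) :
    (∫ x in (0:ℝ)..b, f x * g x)^2 ≤ (∫ x in (0:ℝ)..b, f x ^2) * (∫ x in (0:ℝ)..b, g x^2) := by
  apply cs_key (intervalIntegral.integral_nonneg hb (fun x _ => sq_nonneg _))
  intro t
  have h0 : 0 ≤ ∫ x in (0:ℝ)..b, (t * f x + g x)^2 :=
    intervalIntegral.integral_nonneg hb (fun x _ => sq_nonneg _)
  have hexp : (∫ x in (0:ℝ)..b, (t * f x + g x)^2)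
      = (∫ x in (0:ℝ)..b, f x ^2)*t^2 + 2*(∫ x in (0:ℝ)..b, f x * g x)*t + ∫ x in (0:ℝ)..b, g x^2 := by
    have e : ∀ x, (t*f x + g x)^2 = t^2 * f x^2 + (2*t)*(f x * g x) + g x^2 := by intro x; ring
    simp_rw [e]
    rw [intervalIntegral.integral_add, intervalIntegral.integral_add,
      intervalIntegral.integral_const_mul, intervalIntegral.integral_const_mul]
    · ring
    · exact (continuous_const.mul (hf.pow 2)).intervalIntegrable _ _
    · exact (continuous_const.mul (hf.mul hg)).intervalIntegrable _ _
    · exact ((continuous_const.mul (hf.pow 2)).add (continuous_const.mul (hf.mul hg))).intervalIntegrable _ _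
    · exact (hg.pow 2).intervalIntegrable _ _
  linarith [h0, hexp.symm.le, hexp.le]

lemma cs_abs (b : ℝ) (hb : 0 ≤ b) (f g : ℝ → ℝ) (hf : Continuous f) (hg : Continuous g) :
    |∫ x in (0:ℝ)..b, f x * g x| ≤
      Real.sqrt (∫ x in (0:ℝ)..b, f x ^2) * Real.sqrt (∫ x in (0:ℝ)..b, g x^2) := by
  rw [← Real.sqrt_sq_eq_abs, ← Real.sqrt_mul (intervalIntegral.integral_nonneg hb (fun x _ => sq_nonneg _))]
  exact Real.sqrt_le_sqrt (cs_int b hb f g hf hg)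

lemma ftc0 (b : ℝ) (h h' : ℝ → ℝ) (hd : ∀ x, HasDerivAt h (h' x) x) (hc : Continuous h') :
    ∫ x in (0:ℝ)..b, h' x = h b - h 0 :=
  intervalIntegral.integral_eq_sub_of_hasDerivAt (fun x _ => hd x) (hc.intervalIntegrable _ _)

lemma ibp (b : ℝ) (f g f' g' : ℝ → ℝ) (hf : ∀ x, HasDerivAt f (f' x) x)
    (hg : ∀ x, HasDerivAt g (g' x) x) (hf' : Continuous f') (hg' : Continuous g') :
    ∫ x in (0:ℝ)..b, f' x * g x = f b * g b - f 0 * g 0 - ∫ x in (0:ℝ)..b, f x * g' x := by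
  have hfc : Continuous f := by
    rw [continuous_iff_continuousAt]; exact fun x => (hf x).differentiableAt.continuousAt
  have hgc : Continuous g := by
    rw [continuous_iff_continuousAt]; exact fun x => (hg x).differentiableAt.continuousAt
  have key := intervalIntegral.integral_deriv_mul_eq_sub (a := 0) (b := b)
    (u := f) (v := g) (u' := f') (v' := g')
    (fun x _ => hf x) (fun x _ => hg x) (hf'.intervalIntegrable _ _) (hg'.intervalIntegrable _ _)
  rw [intervalIntegral.integral_add (f := fun x => f' x * g x) (g := fun x => f x * g' x) ((hf'.mul hgc).intervalIntegrable _ _)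
    ((hfc.mul hg').intervalIntegrable _ _)] at key
  linarith

set_option maxHeartbeats 2000000 in
/-- an elliptic-type estimate — the `H³(0,L)` norm of `v` is controlled by the
`L²(0,L)` norms of `v` and of `v' + v''' + λ̃ v`, for smooth `v` vanishing at the endpoints. -/
theorem stmt_8 (L lt : ℝ) (hL : 0 < L) (hlt : 0 < lt) :
    ∃ C : ℝ, 0 < C ∧ ∀ v : ℝ → ℝ, ContDiff ℝ (⊤ : ℕ∞) v → v 0 = 0 → v L = 0 →
      H3n L v ≤ C * (L2n L v + L2n L (fun x => deriv v x + iteratedDeriv 3 v x + lt * v x)) := by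
  -- constants depending only on L and lt
  set Q : ℝ := ∫ x in (0:ℝ)..L, (x*(L-x))^2 with hQdef
  have hQ : 0 ≤ Q := intervalIntegral.integral_nonneg hL.le (fun x _ => sq_nonneg _)
  set sQ := Real.sqrt Q with hsQdef
  set sL := Real.sqrt L with hsLdef
  have hsQ : 0 ≤ sQ := Real.sqrt_nonneg _
  have hsL : 0 ≤ sL := Real.sqrt_nonneg _
  set k1 : ℝ := (36/L^6) * (3*Q + 12*L) with hk1
  set k2 : ℝ := 108*Q/L^4 with hk2
  have hk1n : 0 ≤ k1 := by
    apply mul_nonneg (by positivity)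
    linarith only [hQ, hL]
  have hk2n : 0 ≤ k2 := by
    apply div_nonneg (by linarith only [hQ]) (by positivity)
  set b1 : ℝ := 3*L*k1 + 3 with hb1
  set b2 : ℝ := 3*L*k2 + 3*L^2 with hb2
  have hb1n : 0 ≤ b1 := by
    rw [hb1]; linarith only [mul_nonneg hL.le hk1n]
  have hb2n : 0 ≤ b2 := by
    rw [hb2]; linarith only [mul_nonneg hL.le hk2n, sq_nonneg L]
  set d1 : ℝ := b1 + 2*lt^2*b2 with hd1
  set d2 : ℝ := 2*b2 with hd2
  have hd1n : 0 ≤ d1 := by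
    rw [hd1]; linarith only [hb1n, mul_nonneg (sq_nonneg lt) hb2n]
  have hd2n : 0 ≤ d2 := by rw [hd2]; linarith only [hb2n]
  set K : ℝ := 7 + 3*d1 + 3*d2 + 4*lt^2 with hKdef
  have hK : 0 < K := by
    rw [hKdef]; linarith only [hd1n, hd2n, sq_nonneg lt]
  clear_value sQ sL
  clear_value k1 k2
  clear_value b1 b2
  clear_value d1 d2 K
  clear_value Q
  refine ⟨Real.sqrt K, Real.sqrt_pos.mpr hK, ?_⟩
  intro v hv hv0 hvL
  -- derivatives
  have hder : ∀ f : ℝ → ℝ, ContDiff ℝ (⊤:ℕ∞) f →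
      (∀ x, HasDerivAt f (deriv f x) x) ∧ ContDiff ℝ (⊤:ℕ∞) (deriv f) := by
    intro f hf
    rcases contDiff_infty_iff_deriv.mp hf with ⟨h1, h2⟩
    exact ⟨fun x => (h1 x).hasDerivAt, h2⟩
  have hv' : ContDiff ℝ (⊤:ℕ∞) v := hv.of_le (by simp)
  obtain ⟨hdv, hv1⟩ := hder v hv'
  obtain ⟨hdu1, hv2⟩ := hder _ hv1
  obtain ⟨hdu2, hv3⟩ := hder _ hv2
  -- unfold the norms and iterated derivatives
  simp only [H3n, L2n, Finset.sum_range_succ, Finset.sum_range_zero, iteratedDeriv_succ,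
    iteratedDeriv_zero, zero_add]
  set u1 := deriv v with hu1def
  set u2 := deriv u1 with hu2def
  set u3 := deriv u2 with hu3def
  have hcv : Continuous v := hv'.continuous
  have hcu1 : Continuous u1 := hv1.continuous
  have hcu2 : Continuous u2 := hv2.continuous
  have hcu3 : Continuous u3 := hv3.continuous
  set A : ℝ := ∫ x in (0:ℝ)..L, v x ^ 2 with hAdef
  set P1 : ℝ := ∫ x in (0:ℝ)..L, u1 x ^ 2 with hP1def
  set P2 : ℝ := ∫ x in (0:ℝ)..L, u2 x ^ 2 with hP2def
  set P3 : ℝ := ∫ x in (0:ℝ)..L, u3 x ^ 2 with hP3def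
  set B : ℝ := ∫ x in (0:ℝ)..L, (u1 x + u3 x + lt * v x) ^ 2 with hBdef
  set D : ℝ := ∫ x in (0:ℝ)..L, (u3 x + u1 x) ^ 2 with hDdef
  have hA : 0 ≤ A := intervalIntegral.integral_nonneg hL.le (fun x _ => sq_nonneg _)
  have hB : 0 ≤ B := intervalIntegral.integral_nonneg hL.le (fun x _ => sq_nonneg _)
  have hD : 0 ≤ D := intervalIntegral.integral_nonneg hL.le (fun x _ => sq_nonneg _)
  have hP1n : 0 ≤ P1 := intervalIntegral.integral_nonneg hL.le (fun x _ => sq_nonneg _)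
  have hP2n : 0 ≤ P2 := intervalIntegral.integral_nonneg hL.le (fun x _ => sq_nonneg _)
  have hP3n : 0 ≤ P3 := intervalIntegral.integral_nonneg hL.le (fun x _ => sq_nonneg _)
  set sA := Real.sqrt A with hsAdef
  set sB := Real.sqrt B with hsBdef
  set sD := Real.sqrt D with hsDdef
  have hsA : 0 ≤ sA := Real.sqrt_nonneg _
  have hsB : 0 ≤ sB := Real.sqrt_nonneg _
  have hsD : 0 ≤ sD := Real.sqrt_nonneg _
  clear_value u1 u2 u3 A P1 P2 P3 B D sA sB sD
  -- the primitive of u3 + u1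
  set G : ℝ → ℝ := fun x => ∫ t in (0:ℝ)..x, (u3 t + u1 t) with hGdef
  have hGcont : Continuous G :=
    intervalIntegral.continuous_primitive (fun a b => (hcu3.add hcu1).intervalIntegrable a b) 0
  set c : ℝ := u2 0 with hcdef
  have hrep : ∀ x : ℝ, u2 x = c + G x - v x := by
    intro x
    have h := ftc0 x (fun y => u2 y + v y) (fun y => u3 y + u1 y)
      (fun t => (hdu2 t).add (hdv t)) (hcu3.add hcu1)
    simp only [hv0, add_zero] at h
    simp only [hGdef]
    linarith [h]
  clear_value G c
  -- D bound
  have hDb : D ≤ 2*B + 2*lt^2*A := by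
    have hmono : D ≤ ∫ x in (0:ℝ)..L, (2*(u1 x + u3 x + lt * v x)^2 + (2*lt^2)*(v x)^2) := by
      rw [hDdef]
      apply intervalIntegral.integral_mono_on hL.le
      · exact ((hcu3.add hcu1).pow 2).intervalIntegrable _ _
      · exact ((continuous_const.mul (((hcu1.add hcu3).add (continuous_const.mul hcv)).pow 2)).add
          (continuous_const.mul (hcv.pow 2))).intervalIntegrable _ _
      · intro x _
        have e : 2*(u1 x + u3 x + lt * v x)^2 + (2*lt^2)*(v x)^2 - (u3 x + u1 x)^2
            = (u1 x + u3 x + 2*lt*(v x))^2 := by ring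
        linarith only [sq_nonneg (u1 x + u3 x + 2*lt*(v x)), e]
    have hsplit : (∫ x in (0:ℝ)..L, (2*(u1 x + u3 x + lt * v x)^2 + (2*lt^2)*(v x)^2))
        = 2*B + 2*lt^2*A := by
      rw [intervalIntegral.integral_add (f := fun x => 2*(u1 x + u3 x + lt * v x)^2) (g := fun x => (2*lt^2)*(v x)^2)
        ((continuous_const.mul (((hcu1.add hcu3).add (continuous_const.mul hcv)).pow 2)).intervalIntegrable _ _)
        ((continuous_const.mul (hcv.pow 2)).intervalIntegrable _ _),
        intervalIntegral.integral_const_mul, intervalIntegral.integral_const_mul, hBdef, hAdef]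
      try ring
    linarith [hmono, hsplit.le, hsplit.ge]
  -- bound on ∫ G²
  have hGsq : (∫ x in (0:ℝ)..L, G x ^ 2) ≤ L^2 * D := by
    have hpt : ∀ x ∈ Set.Icc (0:ℝ) L, G x ^ 2 ≤ L * D := by
      intro x hx
      have h1 := cs_int x hx.1 (fun _ => (1:ℝ)) (fun t => u3 t + u1 t) continuous_const
        (hcu3.add hcu1)
      simp only [one_mul, one_pow] at h1
      rw [integral_one] at h1
      have h2 : (∫ t in (0:ℝ)..x, (u3 t + u1 t)^2) ≤ D := by
        rw [hDdef]
        exact intervalIntegral.integral_mono_interval le_rfl hx.1 hx.2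
          (Filter.Eventually.of_forall (fun t => sq_nonneg _))
          (((hcu3.add hcu1).pow 2).intervalIntegrable _ _)
      have h3 : 0 ≤ ∫ t in (0:ℝ)..x, (u3 t + u1 t)^2 :=
        intervalIntegral.integral_nonneg hx.1 (fun t _ => sq_nonneg _)
      have hGx : G x = ∫ t in (0:ℝ)..x, (u3 t + u1 t) := by rw [hGdef]
      have h4 : x * (∫ t in (0:ℝ)..x, (u3 t + u1 t)^2) ≤ L * D :=
        mul_le_mul hx.2 h2 h3 hL.le
      rw [hGx]; linarith [h1, h4]
    have hmono : (∫ x in (0:ℝ)..L, G x ^ 2) ≤ ∫ _x in (0:ℝ)..L, L * D := by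
      apply intervalIntegral.integral_mono_on hL.le
        ((hGcont.pow 2).intervalIntegrable _ _) (intervalIntegrable_const) hpt
    rw [intervalIntegral.integral_const, smul_eq_mul, sub_zero] at hmono
    have e : L*(L*D) = L^2*D := by ring
    linarith only [hmono, e]
  have hφcont : Continuous fun x:ℝ => x*(L-x) := continuous_id.mul (continuous_const.sub continuous_id)
  have eA : sA^2 = A := by rw [hsAdef]; exact Real.sq_sqrt hA
  have eD : sD^2 = D := by rw [hsDdef]; exact Real.sq_sqrt hD
  have eQ : sQ^2 = Q := by rw [hsQdef]; exact Real.sq_sqrt hQ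
  have eL : sL^2 = L := by rw [hsLdef]; exact Real.sq_sqrt hL.le
  -- integration by parts facts
  have hφd : ∀ x : ℝ, HasDerivAt (fun y => y*(L-y)) (L - 2*x) x := by
    intro x
    have h := (hasDerivAt_id x).mul ((hasDerivAt_const x L).sub (hasDerivAt_id x))
    simp only [id_eq] at h
    refine h.congr_deriv ?_
    simp only [Pi.sub_apply, id_eq]; ring
  have hφ'c : Continuous fun x:ℝ => L - 2*x :=
    continuous_const.sub (continuous_const.mul continuous_id)
  have hφ'd : ∀ x : ℝ, HasDerivAt (fun y => L - 2*y) (-2 : ℝ) x := by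
    intro x
    have h := (hasDerivAt_const x L).sub ((hasDerivAt_id x).const_mul 2)
    simp only [id_eq] at h
    refine h.congr_deriv ?_
    norm_num
  have I2 : (∫ x in (0:ℝ)..L, u2 x * (x*(L-x))) = -(∫ x in (0:ℝ)..L, u1 x * (L-2*x)) := by
    have h := ibp L u1 (fun y => y*(L-y)) u2 (fun y => L-2*y) hdu1 hφd hcu2 hφ'c
    simp only [sub_self, mul_zero, zero_mul, zero_sub, sub_zero] at h
    linarith [h]
  have I3 : (∫ x in (0:ℝ)..L, u1 x * (L-2*x)) = 2*(∫ x in (0:ℝ)..L, v x) := by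
    have h := ibp L v (fun y => L-2*y) u1 (fun _ => (-2:ℝ)) hdv hφ'd hcu1 continuous_const
    rw [hv0, hvL] at h
    have e : (∫ x in (0:ℝ)..L, v x * (-2:ℝ)) = -2*(∫ x in (0:ℝ)..L, v x) := by
      rw [intervalIntegral.integral_mul_const]; ring
    simp only [zero_mul, sub_zero, zero_sub, mul_zero] at h
    rw [e] at h
    linarith [h]
  have hIphi : (∫ x in (0:ℝ)..L, x*(L-x)) = L^3/6 := by
    have e : ∀ x:ℝ, x*(L-x) = L*x - x^2 := fun x => by ring
    simp_rw [e]
    rw [intervalIntegral.integral_sub (f := fun x => L*x) (g := fun x => x^2)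
      ((continuous_const.mul continuous_id : Continuous fun x:ℝ => L*x).intervalIntegrable _ _)
      ((continuous_pow 2 : Continuous fun x:ℝ => x^2).intervalIntegrable _ _),
      intervalIntegral.integral_const_mul, integral_id, integral_pow]
    norm_num
    ring
  have hsplit2 : (∫ x in (0:ℝ)..L, u2 x * (x*(L-x)))
      = c*(L^3/6) + (∫ x in (0:ℝ)..L, G x * (x*(L-x))) - ∫ x in (0:ℝ)..L, v x * (x*(L-x)) := by
    have e : ∀ x, u2 x * (x*(L-x)) = c*(x*(L-x)) + G x * (x*(L-x)) - v x*(x*(L-x)) := by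
      intro x; rw [hrep x]; ring
    simp_rw [e]
    rw [intervalIntegral.integral_sub, intervalIntegral.integral_add,
      intervalIntegral.integral_const_mul, hIphi]
    · exact (continuous_const.mul hφcont).intervalIntegrable _ _
    · exact (hGcont.mul hφcont).intervalIntegrable _ _
    · exact ((continuous_const.mul hφcont).add (hGcont.mul hφcont)).intervalIntegrable _ _
    · exact (hcv.mul hφcont).intervalIntegrable _ _
  -- the constant c is controlled
  have hc2b : c^2 ≤ k1*A + k2*D := by
    have hid : c*(L^3/6) = (∫ x in (0:ℝ)..L, v x * (x*(L-x)))
        - (∫ x in (0:ℝ)..L, G x * (x*(L-x))) - 2*(∫ x in (0:ℝ)..L, v x) := by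
      linarith [I2, I3, hsplit2]
    -- Cauchy-Schwarz bounds
    have bv : |∫ x in (0:ℝ)..L, v x| ≤ sA * sL := by
      have h := cs_abs L hL.le v (fun _ => (1:ℝ)) hcv continuous_const
      simp only [mul_one, one_pow] at h
      rw [integral_one, sub_zero] at h
      rw [← hAdef, ← hsAdef, ← hsLdef] at h
      exact h
    have bφ : |∫ x in (0:ℝ)..L, v x * (x*(L-x))| ≤ sA * sQ := by
      have h := cs_abs L hL.le v (fun x => x*(L-x)) hcv hφcont
      rw [← hAdef, ← hQdef, ← hsAdef, ← hsQdef] at h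
      exact h
    have bG : |∫ x in (0:ℝ)..L, G x * (x*(L-x))| ≤ (L*sD) * sQ := by
      have h := cs_abs L hL.le G (fun x => x*(L-x)) hGcont hφcont
      rw [← hQdef, ← hsQdef] at h
      have h2 : Real.sqrt (∫ x in (0:ℝ)..L, G x ^ 2) ≤ L * sD := by
        have h3 : Real.sqrt (∫ x in (0:ℝ)..L, G x ^ 2) ≤ Real.sqrt (L^2*D) :=
          Real.sqrt_le_sqrt hGsq
        rw [Real.sqrt_mul (sq_nonneg L), Real.sqrt_sq hL.le, ← hsDdef] at h3
        exact h3
      exact h.trans (mul_le_mul_of_nonneg_right h2 hsQ)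
    set x1 : ℝ := ∫ x in (0:ℝ)..L, v x * (x*(L-x)) with hx1
    set y1 : ℝ := ∫ x in (0:ℝ)..L, G x * (x*(L-x)) with hy1
    set z1 : ℝ := ∫ x in (0:ℝ)..L, v x with hz1
    clear_value x1 y1 z1
    have hx2 : x1^2 ≤ (sA*sQ)^2 := sq_le_sq' (by linarith [abs_le.mp bφ]) (abs_le.mp bφ).2
    have hy2 : y1^2 ≤ ((L*sD)*sQ)^2 := sq_le_sq' (by linarith [abs_le.mp bG]) (abs_le.mp bG).2
    have hz2 : z1^2 ≤ (sA*sL)^2 := sq_le_sq' (by linarith [abs_le.mp bv]) (abs_le.mp bv).2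
    have hsq : (c*(L^3/6))^2 ≤ 3*(sA*sQ)^2 + 3*((L*sD)*sQ)^2 + 12*(sA*sL)^2 := by
      rw [hid]
      have e : 3*x1^2 + 3*y1^2 + 12*z1^2 - (x1 - y1 - 2*z1)^2
          = (x1+y1)^2 + (x1+2*z1)^2 + (y1-2*z1)^2 := by ring
      linarith only [e, sq_nonneg (x1+y1), sq_nonneg (x1+2*z1), sq_nonneg (y1-2*z1),
        hx2, hy2, hz2]
    have hre : 3*(sA*sQ)^2 + 3*((L*sD)*sQ)^2 + 12*(sA*sL)^2
        = 3*A*Q + 3*L^2*D*Q + 12*A*L := by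
      rw [mul_pow, mul_pow, mul_pow, mul_pow, eA, eD, eQ, eL]
      try ring
    have hmul : (L^6/36)*c^2 ≤ 3*A*Q + 3*L^2*D*Q + 12*A*L := by
      have e : (c*(L^3/6))^2 = (L^6/36)*c^2 := by ring
      linarith [hsq, hre.le, e.le, e.ge]
    have hfin := mul_le_mul_of_nonneg_left hmul (le_of_lt (show (0:ℝ) < 36/L^6 by positivity))
    have e1 : (36/L^6)*((L^6/36)*c^2) = c^2 := by field_simp
    have e2 : (36/L^6)*(3*A*Q + 3*L^2*D*Q + 12*A*L) = k1*A + k2*D := by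
      rw [hk1, hk2]; field_simp; ring
    linarith [hfin, e1.le, e1.ge, e2.le, e2.ge]
  -- P2 bound
  have hP2b : P2 ≤ b1*A + b2*D := by
    have hmono : P2 ≤ ∫ x in (0:ℝ)..L, (3*c^2 + (3*(G x)^2 + 3*(v x)^2)) := by
      rw [hP2def]
      apply intervalIntegral.integral_mono_on hL.le ((hcu2.pow 2).intervalIntegrable _ _)
      · exact (continuous_const.add ((continuous_const.mul (hGcont.pow 2)).add
          (continuous_const.mul (hcv.pow 2)))).intervalIntegrable _ _
      · intro x _
        rw [Pi.pow_apply, hrep x]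
        have e : 3*c^2 + (3*(G x)^2 + 3*(v x)^2) - (c + G x - v x)^2
            = (c - G x)^2 + (c + v x)^2 + (G x + v x)^2 := by ring
        linarith only [e, sq_nonneg (c - G x), sq_nonneg (c + v x), sq_nonneg (G x + v x)]
    have hsplit3 : (∫ x in (0:ℝ)..L, (3*c^2 + (3*(G x)^2 + 3*(v x)^2)))
        = 3*c^2*L + 3*(∫ x in (0:ℝ)..L, G x ^2) + 3*A := by
      rw [intervalIntegral.integral_add (g := fun x => 3*(G x)^2 + 3*(v x)^2) (intervalIntegrable_const)
        (((continuous_const.mul (hGcont.pow 2)).add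
          (continuous_const.mul (hcv.pow 2))).intervalIntegrable _ _),
        intervalIntegral.integral_add (f := fun x => 3*(G x)^2) (g := fun x => 3*(v x)^2) ((continuous_const.mul (hGcont.pow 2)).intervalIntegrable _ _)
          ((continuous_const.mul (hcv.pow 2)).intervalIntegrable _ _)]
      simp only [intervalIntegral.integral_const_mul, intervalIntegral.integral_mul_const,
        intervalIntegral.integral_const, smul_eq_mul, sub_zero, hAdef]
      ring
    have h1 : 3*c^2*L ≤ 3*L*(k1*A + k2*D) := by
      have := mul_le_mul_of_nonneg_left hc2b (show (0:ℝ) ≤ 3*L by positivity)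
      linarith [this]
    have h2 : 3*(∫ x in (0:ℝ)..L, G x ^2) ≤ 3*(L^2*D) := by linarith [hGsq]
    have e : 3*L*(k1*A + k2*D) + 3*(L^2*D) + 3*A = b1*A + b2*D := by
      rw [hb1, hb2]; ring
    linarith [hmono, hsplit3.le, h1, h2, e.le]
  -- P1 bound
  have hP1b : P1 ≤ A/2 + P2/2 := by
    have h := ibp L v u1 u1 u2 hdv hdu1 hcu1 hcu2
    rw [hv0, hvL] at h
    simp only [zero_mul, sub_zero, zero_sub] at h
    have e : (∫ x in (0:ℝ)..L, u1 x * u1 x) = P1 := by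
      rw [hP1def]; congr 1; funext x; ring
    have bb : |∫ x in (0:ℝ)..L, v x * u2 x| ≤ sA * Real.sqrt P2 := by
      have hcs := cs_abs L hL.le v u2 hcv hcu2
      rw [← hAdef, ← hsAdef, ← hP2def] at hcs
      exact hcs
    have eP2 : (Real.sqrt P2)^2 = P2 := Real.sq_sqrt hP2n
    have hsP2 : 0 ≤ Real.sqrt P2 := Real.sqrt_nonneg _
    have h5 : P1 ≤ sA * Real.sqrt P2 := by
      rw [← e, h]
      linarith [abs_le.mp bb, neg_abs_le (∫ x in (0:ℝ)..L, v x * u2 x)]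
    linarith only [sq_nonneg (sA - Real.sqrt P2), eA, eP2, h5]
  -- P3 bound
  have hP3b : P3 ≤ 2*D + 2*P1 := by
    have hmono : P3 ≤ ∫ x in (0:ℝ)..L, (2*(u3 x + u1 x)^2 + 2*(u1 x)^2) := by
      rw [hP3def]
      apply intervalIntegral.integral_mono_on hL.le ((hcu3.pow 2).intervalIntegrable _ _)
      · exact ((continuous_const.mul ((hcu3.add hcu1).pow 2)).add
          (continuous_const.mul (hcu1.pow 2))).intervalIntegrable _ _
      · intro x _
        rw [Pi.pow_apply]
        have e : 2*(u3 x + u1 x)^2 + 2*(u1 x)^2 - (u3 x)^2 = (u3 x + 2*u1 x)^2 := by ring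
        linarith only [sq_nonneg (u3 x + 2*u1 x), e]
    have hsplit4 : (∫ x in (0:ℝ)..L, (2*(u3 x + u1 x)^2 + 2*(u1 x)^2)) = 2*D + 2*P1 := by
      rw [intervalIntegral.integral_add (f := fun x => 2*(u3 x + u1 x)^2) (g := fun x => 2*(u1 x)^2)
        ((continuous_const.mul ((hcu3.add hcu1).pow 2)).intervalIntegrable _ _)
        ((continuous_const.mul (hcu1.pow 2)).intervalIntegrable _ _),
        intervalIntegral.integral_const_mul, intervalIntegral.integral_const_mul, hDdef, hP1def]
    linarith [hmono, hsplit4.le]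
  -- assemble
  have hsum : A + P1 + P2 + P3 ≤ K*A + K*B := by
    have h1 : P2 ≤ d1*A + d2*B := by
      have e1 := mul_le_mul_of_nonneg_left hDb hb2n
      have e2 : b1*A + b2*(2*B + 2*lt^2*A) = d1*A + d2*B := by rw [hd1, hd2]; ring
      linarith [hP2b, e1, e2.le, e2.ge]
    have h2 : (5/2 + 5/2*d1 + 4*lt^2) ≤ K := by rw [hKdef]; linarith
    have h2' := mul_le_mul_of_nonneg_right h2 hA
    have e2 : (5/2 + 5/2*d1 + 4*lt^2) * A = 5/2*A + 5/2*(d1*A) + 4*(lt^2*A) := by ring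
    have h3 : (5/2*d2 + 4) ≤ K := by rw [hKdef]; linarith [sq_nonneg lt]
    have h3' := mul_le_mul_of_nonneg_right h3 hB
    have e3 : (5/2*d2 + 4) * B = 5/2*(d2*B) + 4*B := by ring
    rw [e2] at h2'
    rw [e3] at h3'
    have e4 : d1*A + d2*B = 1*(d1*A) + 1*(d2*B) := by ring
    rw [e4] at h1
    have e5 : 2*B + 2*lt^2*A = 2*B + 2*(lt^2*A) := by ring
    rw [e5] at hDb
    linarith [hP1b, hP3b, hDb, h1, h2', h3']
  -- final square-root manipulation
  have hmain : Real.sqrt (A + P1 + P2 + P3) ≤ Real.sqrt K * (sA + sB) := by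
    have h1 : Real.sqrt (A + P1 + P2 + P3) ≤ Real.sqrt (K * (A + B)) := by
      apply Real.sqrt_le_sqrt
      have e : K*(A+B) = K*A + K*B := mul_add K A B
      linarith [hsum]
    rw [Real.sqrt_mul hK.le] at h1
    refine h1.trans (mul_le_mul_of_nonneg_left ?_ (Real.sqrt_nonneg _))
    have eA : sA^2 = A := by rw [hsAdef]; exact Real.sq_sqrt hA
    have eB : sB^2 = B := by rw [hsBdef]; exact Real.sq_sqrt hB
    have h2 : A + B ≤ (sA + sB)^2 := by
      have e : (sA + sB)^2 = A + B + 2*(sA*sB) := by rw [← eA, ← eB]; ring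
      linarith [mul_nonneg hsA hsB]
    have h3 : Real.sqrt (A + B) ≤ Real.sqrt ((sA + sB)^2) := Real.sqrt_le_sqrt h2
    have h4 : Real.sqrt ((sA + sB)^2) = sA + sB := Real.sqrt_sq (by linarith)
    linarith [h3, h4.le, h4.ge]
  exact hmain
end

section
/- Let L > 0, λ̃ ∈ ℝ, and let w : ℝ² → ℝ be C^∞ (arguments (x,t)) satisfying w_t(x,t) + w_x(x,t) + w_{xxx}(x,t) + λ̃ w(x,t) = 0 for all x ∈ [0,L] and t ≥ 0. Then for every t ≥ 0 the boundary trace identity w_x(0,t)² + w_{xx}(0,t)² = (2/L) ∫_0^L ( (L-x) w_t(x,t) w_{xx}(x,t) + (1/2) w_x(x,t)² + (1/2) w_{xx}(x,t)² + λ̃ (L-x) w(x,t) w_{xx}(x,t) ) dx holds. -/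
open MeasureTheory Real

/-- the boundary trace identity obtained by multiplying the equation by
`(L-x) w_{xx}` and integrating over `(0,L)`. -/
theorem stmt_9 (L lt : ℝ) (hL : 0 < L) (w : ℝ × ℝ → ℝ) (hw : ContDiff ℝ (⊤ : ℕ∞) w)
    (hpde : ∀ x t : ℝ, 0 ≤ x → x ≤ L → 0 ≤ t →
      pd2 w (x, t) + pd1 w (x, t) + pd1 (pd1 (pd1 w)) (x, t) + lt * w (x, t) = 0) :
    ∀ t : ℝ, 0 ≤ t →
      (pd1 w (0, t)) ^ 2 + (pd1 (pd1 w) (0, t)) ^ 2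
        = (2 / L) * ∫ x in (0:ℝ)..L,
            ((L - x) * pd2 w (x, t) * pd1 (pd1 w) (x, t)
              + (1 / 2) * (pd1 w (x, t)) ^ 2
              + (1 / 2) * (pd1 (pd1 w) (x, t)) ^ 2
              + lt * (L - x) * w (x, t) * pd1 (pd1 w) (x, t)) := by
  intro t ht
  set f : ℝ → ℝ := fun s => w (s, t) with hf_def
  have hf : ContDiff ℝ (⊤ : ℕ∞) f := (hw.of_le (by simp)).comp (contDiff_id.prodMk contDiff_const)
  set f1 : ℝ → ℝ := deriv f with hf1_def
  set f2 : ℝ → ℝ := deriv f1 with hf2_def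
  set f3 : ℝ → ℝ := deriv f2 with hf3_def
  have hf1 : ContDiff ℝ (⊤ : ℕ∞) f1 := (contDiff_infty_iff_deriv.mp hf).2
  have hf2 : ContDiff ℝ (⊤ : ℕ∞) f2 := (contDiff_infty_iff_deriv.mp hf1).2
  have hf3 : ContDiff ℝ (⊤ : ℕ∞) f3 := (contDiff_infty_iff_deriv.mp hf2).2
  have hp1 : ∀ x : ℝ, pd1 w (x, t) = f1 x := fun x => rfl
  have hp2 : ∀ x : ℝ, pd1 (pd1 w) (x, t) = f2 x := fun x => rfl
  have hp3 : ∀ x : ℝ, pd1 (pd1 (pd1 w)) (x, t) = f3 x := fun x => rfl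
  -- the antiderivative
  set g : ℝ → ℝ := fun x => -(1/2) * (L - x) * ((f1 x)^2 + (f2 x)^2) with hg_def
  set G : ℝ → ℝ := fun x =>
      (1/2) * ((f1 x)^2 + (f2 x)^2) - (L - x) * (f1 x * f2 x + f2 x * f3 x) with hG_def
  have hgderiv : ∀ x : ℝ, HasDerivAt g (G x) x := by
    intro x
    have hd1 : HasDerivAt f1 (f2 x) x :=
      ((hf1.differentiable (by simp)) x).hasDerivAt
    have hd2 : HasDerivAt f2 (f3 x) x :=
      ((hf2.differentiable (by simp)) x).hasDerivAt
    have h1 : HasDerivAt (fun x : ℝ => -(1/2) * (L - x)) (-(1/2) * (-1)) x :=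
      ((hasDerivAt_id x).const_sub L).const_mul (-(1/2))
    have h2 : HasDerivAt (fun x => (f1 x)^2 + (f2 x)^2)
        ((2 : ℕ) * (f1 x)^1 * f2 x + (2 : ℕ) * (f2 x)^1 * f3 x) x :=
      (hd1.pow 2).add (hd2.pow 2)
    have : HasDerivAt (fun y => -(1/2) * (L - y) * ((f1 y)^2 + (f2 y)^2)) _ x := h1.mul h2
    convert this using 1
    simp [hG_def]
    ring
  have hGcont : Continuous G := by
    apply Continuous.sub
    · exact continuous_const.mul
        (((hf1.continuous.pow 2).add (hf2.continuous.pow 2)))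
    · exact (continuous_const.sub continuous_id).mul
        (((hf1.continuous.mul hf2.continuous).add
          (hf2.continuous.mul hf3.continuous)))
  have hint : (∫ x in (0:ℝ)..L, G x) = g L - g 0 :=
    intervalIntegral.integral_eq_sub_of_hasDerivAt
      (fun x _ => hgderiv x) (hGcont.intervalIntegrable 0 L)
  have hcongr : (∫ x in (0:ℝ)..L,
            ((L - x) * pd2 w (x, t) * pd1 (pd1 w) (x, t)
              + (1 / 2) * (pd1 w (x, t)) ^ 2
              + (1 / 2) * (pd1 (pd1 w) (x, t)) ^ 2
              + lt * (L - x) * w (x, t) * pd1 (pd1 w) (x, t)))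
      = ∫ x in (0:ℝ)..L, G x := by
    apply intervalIntegral.integral_congr
    intro x hx
    rw [Set.uIcc_of_le hL.le] at hx
    have hpde' := hpde x t hx.1 hx.2 ht
    have hw2 : pd2 w (x, t) = -(f1 x + f3 x + lt * w (x, t)) := by
      rw [hp1, hp3] at hpde'; linarith
    dsimp only
    rw [hp1, hp2, hw2, hG_def]
    ring
  rw [hcongr, hint]
  have hgL : g L = 0 := by simp [hg_def]
  have hg0 : g 0 = -(1/2) * L * ((f1 0)^2 + (f2 0)^2) := by simp [hg_def]
  rw [hgL, hg0, hp1, hp2]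
  field_simp
  ring
end
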